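/- arXiv:1701.06807 — 10 statements merged into one kernel-verified Lean document; each statement's English description precedes it below -/
import Mathlib

section
/- Fix n ≥ 1 and κ ≥ 1. For each player i, let Φ_i be the real matrix with rows indexed by Fin κ and columns indexed by strategy profiles x : Fin n → Fin κ, whose (a,x) entry is 1 if a = x i and 0 otherwise (this is the coordinate form of Φ_i = 1ᵀ_{κ^{i−1}} ⊗ I_κ ⊗ 1ᵀ_{κ^{n−i}}). For any σ ∈ Equiv.Perm (Fin n), the iterated Khatri–Rao product T_σ := Φ_{σ⁻¹(1)} ∗ Φ_{σ⁻¹(2)} ∗ ⋯ ∗ Φ_{σ⁻¹(n)}, with its row index type Fin κ × (Fin κ × ⋯) identified with the profile type Fin n → Fin κ in the canonical way, satisfies: for every profile x, T_σ maps the standard basis vector e_x to the standard basis vector e_{x∘σ⁻¹}; equivalently, the (y,x) entry of T_σ is 1 if y = x∘σ⁻¹ and 0 otherwise. -/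
open Matrix

theorem prod_ite_apply_eq {ι α M₀ : Type*} [Fintype ι] [DecidableEq α]
    [CommMonoidWithZero M₀] (y z : ι → α) :
    (∏ i, if y i = z i then (1 : M₀) else 0) = if y = z then 1 else 0 := by
  simp only [Fintype.prod_boole, funext_iff]

theorem mulVec_ite_eq {m n R : Type*} [Fintype n] [DecidableEq n] [NonAssocSemiring R]
    (A : Matrix m n R) (x : n) :
    (A *ᵥ fun z => if z = x then 1 else 0) = fun y => A y x := by
  simp only [← Pi.single_apply, mulVec_single_one]
  rfl

theorem stmt3_general (n κ : ℕ) (σ : Equiv.Perm (Fin n))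
    (Φ : Fin n → Matrix (Fin κ) (Fin n → Fin κ) ℝ)
    (hΦ : ∀ (i : Fin n) (a : Fin κ) (x : Fin n → Fin κ),
      Φ i a x = if a = x i then 1 else 0) :
    (∀ x : Fin n → Fin κ,
      (Matrix.of fun y z : Fin n → Fin κ => ∏ i, Φ (σ⁻¹ i) (y i) z).mulVec
          (fun z => if z = x then 1 else 0)
        = fun y => if y = x ∘ ⇑σ.symm then (1 : ℝ) else 0) ∧
    (∀ y x : Fin n → Fin κ,
      (∏ i, Φ (σ⁻¹ i) (y i) x) = if y = x ∘ ⇑σ.symm then 1 else 0) := by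
  have entry : ∀ y x : Fin n → Fin κ,
      (∏ i, Φ (σ⁻¹ i) (y i) x) = if y = x ∘ ⇑σ.symm then 1 else 0 := fun y x => by
    simp only [hΦ, Equiv.Perm.inv_def]
    exact prod_ite_apply_eq y (x ∘ σ.symm)
  refine ⟨fun x => ?_, entry⟩
  rw [mulVec_ite_eq]
  exact funext fun y => entry y x

/-- with `Φ i` the matrix whose `(a,x)` entry is `1` iff `a = x i`,
the iterated Khatri–Rao product `T_σ = Φ_{σ⁻¹(1)} ∗ ⋯ ∗ Φ_{σ⁻¹(n)}` (whose
`(y,x)` entry, under the canonical identification of the row index with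
profiles, is `∏ i, Φ (σ⁻¹ i) (y i) x`) maps each standard basis vector `e_x`
to `e_{x ∘ σ⁻¹}`; equivalently its `(y,x)` entry is `1` if `y = x ∘ σ⁻¹` and
`0` otherwise. -/
theorem stmt3 (n κ : ℕ) (hn : 1 ≤ n) (hκ : 1 ≤ κ) (σ : Equiv.Perm (Fin n))
    (Φ : Fin n → Matrix (Fin κ) (Fin n → Fin κ) ℝ)
    (hΦ : ∀ (i : Fin n) (a : Fin κ) (x : Fin n → Fin κ),
      Φ i a x = if a = x i then 1 else 0) :
    (∀ x : Fin n → Fin κ,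
      (Matrix.of fun y z : Fin n → Fin κ => ∏ i, Φ (σ⁻¹ i) (y i) z).mulVec
          (fun z => if z = x then 1 else 0)
        = fun y => if y = x ∘ ⇑σ.symm then (1 : ℝ) else 0) ∧
    (∀ y x : Fin n → Fin κ,
      (∏ i, Φ (σ⁻¹ i) (y i) x) = if y = x ∘ ⇑σ.symm then 1 else 0) :=
  stmt3_general n κ σ Φ hΦ
end

section
/- Fix n ≥ 1 and κ ≥ 1 and let c : Fin n → ((Fin n → Fin κ) → ℝ) be a finite game. Then c is ordinary symmetric if and only if for every σ ∈ Equiv.Perm (Fin n) the row vector V_G satisfies V_G · (P_σ ⊗ T_σ) = V_G (multiplication of the row vector on the left of the Kronecker product matrix). -/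
/-! `P_σ` and `T_σ` are permutation matrices, so `P_σ ⊗ T_σ` is the permutation matrix of the
product permutation, and right multiplication by it merely reindexes the structure vector:
`(V_G · (P_σ ⊗ T_σ)) (i, x) = c (σ i) (x ∘ σ⁻¹)`. The matrix identity is therefore the
symmetry condition read entrywise. -/

open Matrix Kronecker

/-- The `n×n` permutation matrix of `σ`: `(i,j)` entry is `1` if `i = σ j`. -/
def permMat (n : ℕ) (σ : Equiv.Perm (Fin n)) : Matrix (Fin n) (Fin n) ℝ :=
  Matrix.of fun i j => if i = σ j then 1 else 0

/-- The permutation matrix `T_σ` on strategy profiles: `(y,x)` entry is `1` if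
`y = x ∘ σ⁻¹`. -/
def profMat (n κ : ℕ) (σ : Equiv.Perm (Fin n)) :
    Matrix (Fin n → Fin κ) (Fin n → Fin κ) ℝ :=
  Matrix.of fun y x => if y = x ∘ ⇑σ.symm then 1 else 0

theorem PEquiv.toMatrix_toPEquiv_kronecker {R l m l' m' : Type*} [MulZeroOneClass R]
    [DecidableEq l] [DecidableEq m] [DecidableEq l'] [DecidableEq m']
    (e : l ≃ m) (f : l' ≃ m') :
    (e.toPEquiv.toMatrix ⊗ₖ f.toPEquiv.toMatrix : Matrix _ _ R) =
      (e.prodCongr f).toPEquiv.toMatrix := by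
  ext ⟨i, i'⟩ ⟨j, j'⟩
  simp only [kroneckerMap_apply, PEquiv.toMatrix_apply, Equiv.toPEquiv_apply, Option.mem_def,
    Option.some.injEq, Equiv.prodCongr_apply, Prod.map_apply, Prod.ext_iff]
  split_ifs <;> simp_all

theorem vecMul_toMatrix_toPEquiv_kronecker {R l m l' m' : Type*} [NonAssocSemiring R]
    [Fintype l] [Fintype l'] [DecidableEq l] [DecidableEq m] [DecidableEq l'] [DecidableEq m']
    (e : l ≃ m) (f : l' ≃ m') (v : l × l' → R) :
    v ᵥ* (e.toPEquiv.toMatrix ⊗ₖ f.toPEquiv.toMatrix) = v ∘ Prod.map e.symm f.symm := by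
  rw [PEquiv.toMatrix_toPEquiv_kronecker, PEquiv.vecMul_toMatrix_toPEquiv]
  rfl

theorem permMat_eq (n : ℕ) (σ : Equiv.Perm (Fin n)) :
    permMat n σ = σ.symm.toPEquiv.toMatrix := by
  ext i j
  simp [permMat, Equiv.symm_apply_eq]

/-- `T_σ` is the permutation matrix of `x ↦ x ∘ σ`. -/
theorem profMat_eq (n κ : ℕ) (σ : Equiv.Perm (Fin n)) :
    profMat n κ σ = (σ.arrowCongr (Equiv.refl (Fin κ))).symm.toPEquiv.toMatrix := by
  ext y x
  simp only [profMat, of_apply, PEquiv.toMatrix_apply, Equiv.toPEquiv_apply, Option.mem_def,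
    Option.some.injEq, Equiv.symm_apply_eq]
  rfl

theorem vecMul_permMat_kronecker_profMat (n κ : ℕ) (σ : Equiv.Perm (Fin n))
    (v : Fin n × (Fin n → Fin κ) → ℝ) :
    v ᵥ* (permMat n σ ⊗ₖ profMat n κ σ) = fun p => v (σ p.1, p.2 ∘ σ.symm) := by
  rw [permMat_eq, profMat_eq, vecMul_toMatrix_toPEquiv_kronecker]
  rfl

theorem stmt5_general (n κ : ℕ)
    (c : Fin n → (Fin n → Fin κ) → ℝ) :
    (∀ (σ : Equiv.Perm (Fin n)) (i : Fin n) (x : Fin n → Fin κ),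
        c i x = c (σ i) (x ∘ ⇑σ.symm)) ↔
    (∀ σ : Equiv.Perm (Fin n),
      Matrix.vecMul (fun p : Fin n × (Fin n → Fin κ) => c p.1 p.2)
          (permMat n σ ⊗ₖ profMat n κ σ)
        = fun p : Fin n × (Fin n → Fin κ) => c p.1 p.2) := by
  simp only [vecMul_permMat_kronecker_profMat, funext_iff, Prod.forall]
  exact forall_congr' fun σ => forall₂_congr fun i x => eq_comm

/-- a finite game `c` is ordinary symmetric iff its structure
vector `V_G` satisfies `V_G · (P_σ ⊗ T_σ) = V_G` for every `σ`. -/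
theorem stmt5 (n κ : ℕ) (hn : 1 ≤ n) (hκ : 1 ≤ κ)
    (c : Fin n → (Fin n → Fin κ) → ℝ) :
    (∀ (σ : Equiv.Perm (Fin n)) (i : Fin n) (x : Fin n → Fin κ),
        c i x = c (σ i) (x ∘ ⇑σ.symm)) ↔
    (∀ σ : Equiv.Perm (Fin n),
      Matrix.vecMul (fun p : Fin n × (Fin n → Fin κ) => c p.1 p.2)
          (permMat n σ ⊗ₖ profMat n κ σ)
        = fun p : Fin n × (Fin n → Fin κ) => c p.1 p.2) :=
  stmt5_general n κ c
end

section
/- Fix n ≥ 1, κ ≥ 1, and positive weights μ : Fin n → ℝ (μ i > 0 for all i); let Γ be the n×n diagonal matrix with diagonal entries μ_1,…,μ_n. Then: (1) the map φ^μ(σ) := (Γ · P_σ · Γ⁻¹) ⊗ T_σ is a linear representation of the symmetric group, i.e. φ^μ(μ' ∘ σ) = φ^μ(μ') · φ^μ(σ) for all μ', σ ∈ Equiv.Perm (Fin n) and each φ^μ(σ) is invertible; (2) a finite game c : Fin n → ((Fin n → Fin κ) → ℝ) is weighted symmetric with respect to μ if and only if V_G · φ^μ(σ) = V_G for every σ ∈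 Equiv.Perm (Fin n). -/
open Matrix Kronecker

/-- `φ^μ(σ) = (Γ P_σ Γ⁻¹) ⊗ T_σ` where `Γ = diag(μ)`. -/
noncomputable def phiW (n κ : ℕ) (μ : Fin n → ℝ) (σ : Equiv.Perm (Fin n)) :
    Matrix (Fin n × (Fin n → Fin κ)) (Fin n × (Fin n → Fin κ)) ℝ :=
  (Matrix.diagonal μ * permMat n σ * (Matrix.diagonal μ)⁻¹) ⊗ₖ profMat n κ σ

/-! `σ ↦ P_σ` and `σ ↦ T_σ` are multiplicative because both are matrices of
maps (`e_j ↦ e_{f j}`), conjugation by the invertible `Γ` and the Kronecker product preserve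
products, so `φ^μ` is a monoid hom out of a group. The row vector `V_G · φ^μ(σ)` has entry
`c (σ j) (x ∘ σ⁻¹) · μ (σ j) / μ j` at `(j, x)`, so its invariance is weighted symmetry after
multiplying by `μ j`. -/

lemma of_ite_eq_mul_of_ite_eq {α β γ R : Type*} [Fintype β] [DecidableEq α] [DecidableEq β]
    [NonAssocSemiring R] (f : β → α) (g : γ → β) :
    (of fun i j => if i = f j then (1 : R) else 0) *
        (of fun i j => if i = g j then (1 : R) else 0) =
      of fun i j => if i = f (g j) then 1 else 0 := by
  ext i j
  simp [mul_apply]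

lemma permMat_mul (n : ℕ) (σ τ : Equiv.Perm (Fin n)) :
    permMat n (σ * τ) = permMat n σ * permMat n τ :=
  (of_ite_eq_mul_of_ite_eq σ τ).symm

lemma profMat_mul (n κ : ℕ) (σ τ : Equiv.Perm (Fin n)) :
    profMat n κ (σ * τ) = profMat n κ σ * profMat n κ τ :=
  (of_ite_eq_mul_of_ite_eq (fun x : Fin n → Fin κ => x ∘ σ.symm) (· ∘ τ.symm)).symm

lemma conj_mul_conj {ι R : Type*} [Fintype ι] [DecidableEq ι] [CommRing R]
    (M A B : Matrix ι ι R) (hM : IsUnit M.det) :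
    M * A * M⁻¹ * (M * B * M⁻¹) = M * (A * B) * M⁻¹ := by
  simp only [Matrix.mul_assoc, nonsing_inv_mul_cancel_left _ _ hM]

lemma isUnit_det_diagonal {ι K : Type*} [Fintype ι] [DecidableEq ι] [Field K] {μ : ι → K}
    (hμ : ∀ i, μ i ≠ 0) :
    IsUnit (diagonal μ).det := by
  rw [det_diagonal]
  exact (Finset.prod_ne_zero_iff.mpr fun i _ => hμ i).isUnit

noncomputable def phiWHom (n κ : ℕ) {μ : Fin n → ℝ} (hμ : ∀ i, μ i ≠ 0) :
    Equiv.Perm (Fin n) →* Matrix (Fin n × (Fin n → Fin κ)) (Fin n × (Fin n → Fin κ)) ℝ where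
  toFun := phiW n κ μ
  map_one' := by
    have hP : permMat n 1 = 1 := by ext i j; simp only [permMat, one_apply, of_apply]; rfl
    have hT : profMat n κ 1 = 1 := by ext y x; simp only [profMat, one_apply, of_apply]; rfl
    rw [phiW, hP, hT, Matrix.mul_one, mul_nonsing_inv _ (isUnit_det_diagonal hμ),
      one_kronecker_one]
  map_mul' σ τ := by
    rw [phiW, phiW, phiW, ← mul_kronecker_mul, conj_mul_conj _ _ _ (isUnit_det_diagonal hμ),
      permMat_mul, profMat_mul]

lemma phiW_apply {n κ : ℕ} {μ : Fin n → ℝ} (hμ : ∀ i, μ i ≠ 0) (σ : Equiv.Perm (Fin n))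
    (p q : Fin n × (Fin n → Fin κ)) :
    phiW n κ μ σ p q = if p = (σ q.1, q.2 ∘ σ.symm) then μ p.1 / μ q.1 else 0 := by
  simp only [phiW, kroneckerMap_apply, inv_diagonal, mul_diagonal, diagonal_mul, permMat,
    profMat, of_apply, Prod.ext_iff]
  split_ifs <;> simp_all [Ring.inverse, Pi.isUnit_iff, div_eq_mul_inv]

lemma vecMul_phiW_apply {n κ : ℕ} {μ : Fin n → ℝ} (hμ : ∀ i, μ i ≠ 0) (σ : Equiv.Perm (Fin n))
    (c : Fin n → (Fin n → Fin κ) → ℝ) (j : Fin n) (x : Fin n → Fin κ) :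
    vecMul (fun p : Fin n × (Fin n → Fin κ) => c p.1 p.2) (phiW n κ μ σ) (j, x) =
      c (σ j) (x ∘ σ.symm) * (μ (σ j) / μ j) := by
  simp [vecMul, dotProduct, phiW_apply hμ, mul_ite]

lemma vecMul_phiW_eq_self_iff {n κ : ℕ} {μ : Fin n → ℝ} (hμ : ∀ i, μ i ≠ 0)
    (σ : Equiv.Perm (Fin n)) (c : Fin n → (Fin n → Fin κ) → ℝ) :
    vecMul (fun p : Fin n × (Fin n → Fin κ) => c p.1 p.2) (phiW n κ μ σ) =
        (fun p : Fin n × (Fin n → Fin κ) => c p.1 p.2) ↔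
      ∀ i x, μ i * c i x = μ (σ i) * c (σ i) (x ∘ σ.symm) := by
  simp only [funext_iff, Prod.forall, vecMul_phiW_apply hμ]
  refine forall₂_congr fun i x => ?_
  rw [mul_div_assoc', div_eq_iff (hμ i), eq_comm, mul_comm (c i x), mul_comm (μ (σ i))]

theorem stmt6_general (n κ : ℕ)
    (μ : Fin n → ℝ) (hμ : ∀ i, 0 < μ i) :
    ((∀ μ' σ : Equiv.Perm (Fin n),
        phiW n κ μ (μ' * σ) = phiW n κ μ μ' * phiW n κ μ σ) ∧
      (∀ σ : Equiv.Perm (Fin n), IsUnit (phiW n κ μ σ))) ∧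
    (∀ c : Fin n → (Fin n → Fin κ) → ℝ,
      (∀ (σ : Equiv.Perm (Fin n)) (i : Fin n) (x : Fin n → Fin κ),
          μ i * c i x = μ (σ i) * c (σ i) (x ∘ ⇑σ.symm)) ↔
      (∀ σ : Equiv.Perm (Fin n),
        Matrix.vecMul (fun p : Fin n × (Fin n → Fin κ) => c p.1 p.2) (phiW n κ μ σ)
          = fun p : Fin n × (Fin n → Fin κ) => c p.1 p.2)) := by
  have hμ₀ : ∀ i, μ i ≠ 0 := fun i => (hμ i).ne'
  refine ⟨⟨(phiWHom n κ hμ₀).map_mul, fun σ => (Group.isUnit σ).map (phiWHom n κ hμ₀)⟩,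
    fun c => forall_congr' fun σ => (vecMul_phiW_eq_self_iff hμ₀ σ c).symm⟩

/-- (1) `φ^μ` is a linear representation of the symmetric group;
(2) a game `c` is weighted symmetric w.r.t. the positive weights `μ` iff
`V_G · φ^μ(σ) = V_G` for all `σ`. -/
theorem stmt6 (n κ : ℕ) (hn : 1 ≤ n) (hκ : 1 ≤ κ)
    (μ : Fin n → ℝ) (hμ : ∀ i, 0 < μ i) :
    ((∀ μ' σ : Equiv.Perm (Fin n),
        phiW n κ μ (μ' * σ) = phiW n κ μ μ' * phiW n κ μ σ) ∧
      (∀ σ : Equiv.Perm (Fin n), IsUnit (phiW n κ μ σ))) ∧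
    (∀ c : Fin n → (Fin n → Fin κ) → ℝ,
      (∀ (σ : Equiv.Perm (Fin n)) (i : Fin n) (x : Fin n → Fin κ),
          μ i * c i x = μ (σ i) * c (σ i) (x ∘ ⇑σ.symm)) ↔
      (∀ σ : Equiv.Perm (Fin n),
        Matrix.vecMul (fun p : Fin n × (Fin n → Fin κ) => c p.1 p.2) (phiW n κ μ σ)
          = fun p : Fin n × (Fin n → Fin κ) => c p.1 p.2)) :=
  stmt6_general n κ μ hμ
end

section
/- Fix n ≥ 1, κ ≥ 1, and a renaming r : Fin n → Equiv.Perm (Fin κ). Let Γ_r be the real permutation matrix, with rows and columns indexed by strategy profiles Fin n → Fin κ, whose (y,x) entry is 1 if y = (fun j => r j (x j)) and 0 otherwise (this is the Kronecker product P_{r_1} ⊗ ⋯ ⊗ P_{r_n} under the canonical identification of index types), and for σ ∈ Equiv.Perm (Fin n) set T^r_σ := Γ_rᵀ · T_σ · Γ_r. Then a finite game c : Fin n → ((Fin n → Fin κ) → ℝ) is renaming symmetric with renaming r if and only if V_G · (P_σ ⊗ T^r_σ) = V_G for every σ ∈ Equiv.Perm (Fin n). -/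
open Matrix Kronecker

/-- The renaming matrix `Γ_r` on strategy profiles: `(y,x)` entry is `1` if
`y = (fun j => r j (x j))` (i.e. `Γ_r = P_{r_1} ⊗ ⋯ ⊗ P_{r_n}` under the
canonical identification of index types). -/
def renMat (n κ : ℕ) (r : Fin n → Equiv.Perm (Fin κ)) :
    Matrix (Fin n → Fin κ) (Fin n → Fin κ) ℝ :=
  Matrix.of fun y x => if y = fun j => r j (x j) then 1 else 0

/-! All matrices involved are permutation matrices. With `ρ x = fun j => r j (x j)` and
`τ_σ x = x ∘ σ⁻¹`, multiplying `V_G` on the right by `P_σ ⊗ T^r_σ` precomposes it with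
`(i, y) ↦ (σ i, ρ⁻¹ (τ_σ (ρ y)))`. Substituting `x = ρ y` turns invariance under these maps
into ordinary symmetry of the renamed game `c^r = c ∘ ρ⁻¹`. -/

open Equiv

namespace Matrix

theorem of_ite_eq_apply_eq_permMatrix_inv {X R : Type*} [DecidableEq X] [Zero R] [One R]
    (e : Perm X) :
    (of fun y x => if y = e x then 1 else 0 : Matrix X X R) = Perm.permMatrix R e⁻¹ := by
  ext y x
  simp [Perm.inv_def, Equiv.eq_symm_apply, eq_comm]

theorem permMatrix_kronecker_permMatrix {X Y R : Type*} [DecidableEq X] [DecidableEq Y]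
    [MulZeroOneClass R] (σ : Perm X) (τ : Perm Y) :
    σ.permMatrix R ⊗ₖ τ.permMatrix R = Perm.permMatrix R (σ.prodCongr τ) := by
  ext ⟨x, y⟩ ⟨x', y'⟩
  simp [kroneckerMap_apply, ← ite_and, and_comm]

theorem vecMul_permMatrix_inv_kronecker_permMatrix_inv {X Y R : Type*} [DecidableEq X]
    [DecidableEq Y] [Fintype X] [Fintype Y] [CommRing R] (v : X × Y → R) (σ : Perm X)
    (τ : Perm Y) : v ᵥ* (σ⁻¹.permMatrix R ⊗ₖ τ⁻¹.permMatrix R) = v ∘ σ.prodCongr τ := by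
  rw [permMatrix_kronecker_permMatrix, vecMul_permMatrix]
  rfl

end Matrix

open Matrix

section

variable {n κ : ℕ}

theorem permMat_eq_permMatrix_inv (σ : Perm (Fin n)) : permMat n σ = σ⁻¹.permMatrix ℝ :=
  of_ite_eq_apply_eq_permMatrix_inv σ

theorem profMat_eq_permMatrix_inv (σ : Perm (Fin n)) :
    profMat n κ σ = Perm.permMatrix ℝ (σ.arrowCongr (Equiv.refl (Fin κ)))⁻¹ :=
  of_ite_eq_apply_eq_permMatrix_inv (σ.arrowCongr (Equiv.refl (Fin κ)))

theorem renMat_eq_permMatrix_inv (r : Fin n → Perm (Fin κ)) :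
    renMat n κ r = Perm.permMatrix ℝ (piCongrRight r)⁻¹ :=
  of_ite_eq_apply_eq_permMatrix_inv (piCongrRight r)

theorem transpose_renMat_mul_profMat_mul_renMat (r : Fin n → Perm (Fin κ))
    (σ : Perm (Fin n)) :
    (renMat n κ r)ᵀ * profMat n κ σ * renMat n κ r =
      Perm.permMatrix ℝ
        ((piCongrRight r)⁻¹ * σ.arrowCongr (Equiv.refl (Fin κ)) * piCongrRight r)⁻¹ := by
  simp only [renMat_eq_permMatrix_inv, profMat_eq_permMatrix_inv, transpose_permMatrix, inv_inv,
    _root_.mul_inv_rev, permMatrix_mul, Matrix.mul_assoc]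

end

theorem stmt7_general (n κ : ℕ)
    (r : Fin n → Equiv.Perm (Fin κ)) (c : Fin n → (Fin n → Fin κ) → ℝ) :
    (∀ (σ : Equiv.Perm (Fin n)) (i : Fin n) (x : Fin n → Fin κ),
        c i (fun j => (r j)⁻¹ (x j))
          = c (σ i) (fun j => (r j)⁻¹ ((x ∘ ⇑σ.symm) j))) ↔
    (∀ σ : Equiv.Perm (Fin n),
      Matrix.vecMul (fun p : Fin n × (Fin n → Fin κ) => c p.1 p.2)
          (permMat n σ ⊗ₖ ((renMat n κ r)ᵀ * profMat n κ σ * renMat n κ r))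
        = fun p : Fin n × (Fin n → Fin κ) => c p.1 p.2) := by
  simp_rw [transpose_renMat_mul_profMat_mul_renMat, permMat_eq_permMatrix_inv,
    vecMul_permMatrix_inv_kronecker_permMatrix_inv, funext_iff, Prod.forall]
  refine forall_congr' fun σ => forall_congr' fun i => ?_
  rw [← (piCongrRight r).forall_congr_right]
  refine forall_congr' fun y => ?_
  simp only [piCongrRight_apply, Pi.map_apply, Perm.inv_def, symm_apply_apply]
  exact eq_comm

/-- a finite game `c` is renaming symmetric with renaming `r`
(i.e. the renamed game `c^r i x = c i (fun j => (r j)⁻¹ (x j))` is ordinary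
symmetric) iff `V_G · (P_σ ⊗ T^r_σ) = V_G` for every `σ`, where
`T^r_σ = Γ_rᵀ · T_σ · Γ_r`. -/
theorem stmt7 (n κ : ℕ) (hn : 1 ≤ n) (hκ : 1 ≤ κ)
    (r : Fin n → Equiv.Perm (Fin κ)) (c : Fin n → (Fin n → Fin κ) → ℝ) :
    (∀ (σ : Equiv.Perm (Fin n)) (i : Fin n) (x : Fin n → Fin κ),
        c i (fun j => (r j)⁻¹ (x j))
          = c (σ i) (fun j => (r j)⁻¹ ((x ∘ ⇑σ.symm) j))) ↔
    (∀ σ : Equiv.Perm (Fin n),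
      Matrix.vecMul (fun p : Fin n × (Fin n → Fin κ) => c p.1 p.2)
          (permMat n σ ⊗ₖ ((renMat n κ r)ᵀ * profMat n κ σ * renMat n κ r))
        = fun p : Fin n × (Fin n → Fin κ) => c p.1 p.2) :=
  stmt7_general n κ r c
end

section
/- Fix n ≥ 1, strategy-set sizes k : Fin n → ℕ with k i ≥ 1, payoff functions c : Fin n → ((∀ i, Fin (k i)) → ℝ), and weights w : Fin n → ℝ with w i > 0. Write 1 for the first player (the index 0 of Fin n), and for a profile s let s_{−i} denote the restriction of s to the coordinates j ≠ i. Then c is a weighted potential game with weights w if and only if there exist functions ξ_i : ({j // j ≠ i} → Fin (k j)) → ℝ for each i, such that for every player i ≠ 1 and every profile s, w_1 · c i s − w_i · c 1 s = w_1 · ξ_i (s_{−i}) − w_i · ξ_1 (s_{−1}). Moreover, when such ξ exist, the function P(s) := (1 / w_1) · (c 1 s − ξ_1 (s_{−1})) is a weighted potential function for c with weights w. -/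
/-!
If `P` is a weighted potential, then `c i - w i * P` does not depend on the strategy of player `i`,
so it is a function `ξ i` of `s₋ᵢ`; eliminating `P` between player `i` and player `1` gives the
potential equation. Conversely, the potential equation writes `w 1 * c i` as
`w i * (c 1 - ξ 1 (s₋₁))` plus a function of `s₋ᵢ`, so a deviation of player `i` changes `c i` by
`w i / w 1` times the change of `c 1 - ξ 1 (s₋₁)`.
-/

namespace WeightedPotentialGame

variable {ι : Type*} {α : ι → Type*}

def IsWeightedPotential (c : ι → (∀ i, α i) → ℝ) (w : ι → ℝ) (P : (∀ i, α i) → ℝ) : Prop :=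
  ∀ (i : ι) (s t : ∀ i, α i), (∀ j, j ≠ i → s j = t j) → c i s - c i t = w i * (P s - P t)

/-- The potential equation, with `i₀` in the role of player `1`. -/
def PotentialEquation (c : ι → (∀ i, α i) → ℝ) (w : ι → ℝ) (i₀ : ι)
    (ξ : ∀ i : ι, (∀ j : {j : ι // j ≠ i}, α j.1) → ℝ) : Prop :=
  ∀ i : ι, i ≠ i₀ → ∀ s : ∀ i, α i,
    w i₀ * c i s - w i * c i₀ s = w i₀ * ξ i (fun j => s j.1) - w i * ξ i₀ (fun j => s j.1)

lemma restrict_eq_restrict_iff {i : ι} {s t : ∀ i, α i} :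
    ((fun j : {j : ι // j ≠ i} => s j.1) = fun j : {j : ι // j ≠ i} => t j.1) ↔
      ∀ j, j ≠ i → s j = t j :=
  ⟨fun h j hj => congrFun h ⟨j, hj⟩, fun h => funext fun j => h j.1 j.2⟩

section Potential

variable {c : ι → (∀ i, α i) → ℝ} {w : ι → ℝ} {P : (∀ i, α i) → ℝ}

lemma IsWeightedPotential.factorsThrough_restrict (hP : IsWeightedPotential c w P) (i : ι) :
    Function.FactorsThrough (fun s => c i s - w i * P s)
      (fun s : ∀ i, α i => fun j : {j : ι // j ≠ i} => s j.1) := by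
  intro s t hst
  have := hP i s t (restrict_eq_restrict_iff.1 hst)
  linear_combination this

/-- `c i - w i * P` read as a function of `s₋ᵢ`; it is well defined when `P` is a weighted
potential (`Function.extend` takes the value at any preimage, and `0` off the range). -/
noncomputable def potentialResidual (c : ι → (∀ i, α i) → ℝ) (w : ι → ℝ) (P : (∀ i, α i) → ℝ)
    (i : ι) : (∀ j : {j : ι // j ≠ i}, α j.1) → ℝ :=
  Function.extend (fun s : ∀ i, α i => fun j : {j : ι // j ≠ i} => s j.1)
    (fun s => c i s - w i * P s) 0

lemma IsWeightedPotential.potentialResidual_restrict (hP : IsWeightedPotential c w P) (i : ι)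
    (s : ∀ i, α i) : potentialResidual c w P i (fun j => s j.1) = c i s - w i * P s :=
  (hP.factorsThrough_restrict i).extend_apply 0 s

lemma IsWeightedPotential.potentialEquation (hP : IsWeightedPotential c w P) (i₀ : ι) :
    PotentialEquation c w i₀ (potentialResidual c w P) := by
  intro i _ s
  rw [hP.potentialResidual_restrict i, hP.potentialResidual_restrict i₀]
  ring

end Potential

lemma PotentialEquation.isWeightedPotential {c : ι → (∀ i, α i) → ℝ} {w : ι → ℝ} {i₀ : ι}
    {ξ : ∀ i : ι, (∀ j : {j : ι // j ≠ i}, α j.1) → ℝ} (hξ : PotentialEquation c w i₀ ξ)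
    (hw : w i₀ ≠ 0) :
    IsWeightedPotential c w fun s => (1 / w i₀) * (c i₀ s - ξ i₀ (fun j => s j.1)) := by
  intro i s t hst
  dsimp only
  have hξ_restrict (l : ι) (hl : ∀ j, j ≠ l → s j = t j) :
      ξ l (fun j => s j.1) = ξ l (fun j => t j.1) :=
    congrArg (ξ l) (restrict_eq_restrict_iff.2 hl)
  by_cases hi : i = i₀
  · subst hi
    rw [hξ_restrict i hst]
    field_simp
    ring
  · have hdiff : w i₀ * (c i s - c i t)
        = w i * ((c i₀ s - ξ i₀ (fun j => s j.1)) - (c i₀ t - ξ i₀ (fun j => t j.1))) := by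
      linear_combination hξ i hi s - hξ i hi t + w i₀ * hξ_restrict i hst
    field_simp
    linear_combination hdiff

end WeightedPotentialGame

open WeightedPotentialGame in
theorem stmt11_general (n : ℕ) (hn : 1 ≤ n) (k : Fin n → ℕ)
    (c : Fin n → ((∀ i, Fin (k i)) → ℝ)) (w : Fin n → ℝ) (hw : ∀ i, 0 < w i) :
    ((∃ P : (∀ i, Fin (k i)) → ℝ,
        ∀ (i : Fin n) (s t : ∀ i, Fin (k i)), (∀ j, j ≠ i → s j = t j) →
          c i s - c i t = w i * (P s - P t)) ↔
      (∃ ξ : ∀ i : Fin n, ((∀ j : {j : Fin n // j ≠ i}, Fin (k j.1)) → ℝ),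
        ∀ i : Fin n, i ≠ ⟨0, hn⟩ → ∀ s : ∀ i, Fin (k i),
          w ⟨0, hn⟩ * c i s - w i * c ⟨0, hn⟩ s
            = w ⟨0, hn⟩ * ξ i (fun j => s j.1)
              - w i * ξ ⟨0, hn⟩ (fun j => s j.1))) ∧
    (∀ ξ : ∀ i : Fin n, ((∀ j : {j : Fin n // j ≠ i}, Fin (k j.1)) → ℝ),
      (∀ i : Fin n, i ≠ ⟨0, hn⟩ → ∀ s : ∀ i, Fin (k i),
        w ⟨0, hn⟩ * c i s - w i * c ⟨0, hn⟩ s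
          = w ⟨0, hn⟩ * ξ i (fun j => s j.1)
            - w i * ξ ⟨0, hn⟩ (fun j => s j.1)) →
      ∀ (i : Fin n) (s t : ∀ i, Fin (k i)), (∀ j, j ≠ i → s j = t j) →
        c i s - c i t
          = w i * ((1 / w ⟨0, hn⟩) * (c ⟨0, hn⟩ s - ξ ⟨0, hn⟩ (fun j => s j.1))
              - (1 / w ⟨0, hn⟩) * (c ⟨0, hn⟩ t - ξ ⟨0, hn⟩ (fun j => t j.1)))) := by
  have hw₀ : w ⟨0, hn⟩ ≠ 0 := (hw _).ne'
  have hsufficient (ξ) (hξ : PotentialEquation c w ⟨0, hn⟩ ξ) :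
      IsWeightedPotential c w fun s =>
        (1 / w ⟨0, hn⟩) * (c ⟨0, hn⟩ s - ξ ⟨0, hn⟩ (fun j => s j.1)) :=
    hξ.isWeightedPotential hw₀
  exact ⟨⟨fun ⟨P, hP⟩ => ⟨potentialResidual c w P, IsWeightedPotential.potentialEquation hP _⟩,
    fun ⟨ξ, hξ⟩ => ⟨_, hsufficient ξ hξ⟩⟩, hsufficient⟩

/-- potential equation: `c` is a weighted potential game with
weights `w` iff there exist functions `ξ i` of the profile restricted away
from coordinate `i` such that for every player `i ≠ 1` (player `1` being the
index `0` of `Fin n`) and every profile `s`,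
`w 1 * c i s - w i * c 1 s = w 1 * ξ i (s_{-i}) - w i * ξ 1 (s_{-1})`.
Moreover, given such `ξ`, `P s := (1 / w 1) * (c 1 s - ξ 1 (s_{-1}))` is a
weighted potential function. -/
theorem stmt11 (n : ℕ) (hn : 1 ≤ n) (k : Fin n → ℕ) (hk : ∀ i, 1 ≤ k i)
    (c : Fin n → ((∀ i, Fin (k i)) → ℝ)) (w : Fin n → ℝ) (hw : ∀ i, 0 < w i) :
    ((∃ P : (∀ i, Fin (k i)) → ℝ,
        ∀ (i : Fin n) (s t : ∀ i, Fin (k i)), (∀ j, j ≠ i → s j = t j) →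
          c i s - c i t = w i * (P s - P t)) ↔
      (∃ ξ : ∀ i : Fin n, ((∀ j : {j : Fin n // j ≠ i}, Fin (k j.1)) → ℝ),
        ∀ i : Fin n, i ≠ ⟨0, hn⟩ → ∀ s : ∀ i, Fin (k i),
          w ⟨0, hn⟩ * c i s - w i * c ⟨0, hn⟩ s
            = w ⟨0, hn⟩ * ξ i (fun j => s j.1)
              - w i * ξ ⟨0, hn⟩ (fun j => s j.1))) ∧
    (∀ ξ : ∀ i : Fin n, ((∀ j : {j : Fin n // j ≠ i}, Fin (k j.1)) → ℝ),
      (∀ i : Fin n, i ≠ ⟨0, hn⟩ → ∀ s : ∀ i, Fin (k i),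
        w ⟨0, hn⟩ * c i s - w i * c ⟨0, hn⟩ s
          = w ⟨0, hn⟩ * ξ i (fun j => s j.1)
            - w i * ξ ⟨0, hn⟩ (fun j => s j.1)) →
      ∀ (i : Fin n) (s t : ∀ i, Fin (k i)), (∀ j, j ≠ i → s j = t j) →
        c i s - c i t
          = w i * ((1 / w ⟨0, hn⟩) * (c ⟨0, hn⟩ s - ξ ⟨0, hn⟩ (fun j => s j.1))
              - (1 / w ⟨0, hn⟩) * (c ⟨0, hn⟩ t - ξ ⟨0, hn⟩ (fun j => t j.1)))) :=
  stmt11_general n hn k c w hw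
end

section
/- Fix n ≥ 1, κ ≥ 1, a finite game c : Fin n → ((Fin n → Fin κ) → ℝ), and positive weights μ : Fin n → ℝ (μ i > 0 for all i). Then c is weighted symmetric with respect to μ if and only if for all players i, j and all profiles x, y such that x i = y j and the multiset of values {x k : k ≠ i} equals the multiset of values {y k : k ≠ j}, one has μ_i · c i x = μ_j · c j y. -/
/-!
A permutation `σ` carries player `i` at profile `x` to player `σ i` at `x ∘ σ⁻¹`, with the same
own strategy and the same multiset of opponents' strategies. Conversely, if `x i = y j` and the opponents' multisets agree, a bijection
between the opponents of `i` and of `j` matching their strategies exists fiberwise by counting;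
extending it by `i ↦ j` gives a permutation `σ` with `σ i = j` and `x ∘ σ⁻¹ = y`.
-/

open Finset

theorem exists_equiv_apply_eq_of_map_univ_eq {α β γ : Type*} [Fintype α] [Fintype β]
    {f : α → γ} {g : β → γ} (h : univ.val.map f = univ.val.map g) :
    ∃ e : α ≃ β, ∀ a, g (e a) = f a := by
  classical
  have hfiber (c : γ) : Fintype.card {a // f a = c} = Fintype.card {b // g b = c} := by
    have := congrArg (Multiset.count c) h
    simp only [Multiset.count_map] at this
    simpa only [Fintype.card_subtype, eq_comm, card_def, filter_val] using this
  exact ⟨.ofFiberEquiv fun c => Fintype.equivOfCardEq (hfiber c), Equiv.ofFiberEquiv_map _⟩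

theorem map_erase_univ_comp_symm {ι S : Type*} [Fintype ι] [DecidableEq ι]
    (σ : Equiv.Perm ι) (x : ι → S) (i : ι) :
    (univ.erase (σ i)).val.map (x ∘ σ.symm) = (univ.erase i).val.map x := by
  rw [← Multiset.map_map, erase_val, erase_val, Multiset.map_erase _ σ.symm.injective,
    Multiset.map_univ_val_equiv, σ.symm_apply_apply]

theorem exists_perm_of_map_erase_univ_eq {ι S : Type*} [Fintype ι] [DecidableEq ι]
    {i j : ι} {x y : ι → S} (hij : x i = y j)
    (h : (univ.erase i).val.map x = (univ.erase j).val.map y) :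
    ∃ σ : Equiv.Perm ι, σ i = j ∧ x ∘ σ.symm = y := by
  simp only [← filter_ne', ← univ_val_map_subtype_restrict] at h
  obtain ⟨e, he⟩ := exists_equiv_apply_eq_of_map_univ_eq h
  let σ := ((Equiv.optionSubtypeNe i).symm.trans (Equiv.optionCongr e)).trans
    (Equiv.optionSubtypeNe j)
  have hσ (k : ι) : y (σ k) = x k := by
    by_cases hk : k = i
    · subst hk; simp [σ, hij]
    · simpa [σ, Equiv.optionSubtypeNe_symm_of_ne hk] using he ⟨k, hk⟩
  refine ⟨σ, by simp [σ], funext fun k => ?_⟩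
  simpa using (hσ (σ.symm k)).symm

def IsWeightedSymmetric {ι S : Type*} (μ : ι → ℝ) (c : ι → (ι → S) → ℝ) : Prop :=
  ∀ (σ : Equiv.Perm ι) (i : ι) (x : ι → S), μ i * c i x = μ (σ i) * c (σ i) (x ∘ σ.symm)

theorem isWeightedSymmetric_iff {ι S : Type*} [Fintype ι] [DecidableEq ι]
    (μ : ι → ℝ) (c : ι → (ι → S) → ℝ) :
    IsWeightedSymmetric μ c ↔
      ∀ (i j : ι) (x y : ι → S), x i = y j →
        (univ.erase i).val.map x = (univ.erase j).val.map y → μ i * c i x = μ j * c j y := by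
  refine ⟨fun h i j x y hij hmap => ?_, fun h σ i x => ?_⟩
  · obtain ⟨σ, rfl, rfl⟩ := exists_perm_of_map_erase_univ_eq hij hmap
    exact h σ i x
  · exact h i (σ i) x (x ∘ σ.symm) (by simp) (map_erase_univ_comp_symm σ x i).symm

theorem stmt12_general (n κ : ℕ)
    (c : Fin n → (Fin n → Fin κ) → ℝ) (μ : Fin n → ℝ) :
    (∀ (σ : Equiv.Perm (Fin n)) (i : Fin n) (x : Fin n → Fin κ),
        μ i * c i x = μ (σ i) * c (σ i) (x ∘ ⇑σ.symm)) ↔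
    (∀ (i j : Fin n) (x y : Fin n → Fin κ),
        x i = y j →
        (Finset.univ.erase i).val.map x = (Finset.univ.erase j).val.map y →
        μ i * c i x = μ j * c j y) :=
  isWeightedSymmetric_iff μ c

/-- a finite game `c` is weighted symmetric with respect to
positive weights `μ` iff for all players `i, j` and profiles `x, y` with
`x i = y j` and equal multisets of opponents' strategies
(`{x k : k ≠ i} = {y k : k ≠ j}` as multisets), one has
`μ i * c i x = μ j * c j y`. -/
theorem stmt12 (n κ : ℕ) (hn : 1 ≤ n) (hκ : 1 ≤ κ)
    (c : Fin n → (Fin n → Fin κ) → ℝ) (μ : Fin n → ℝ) (hμ : ∀ i, 0 < μ i) :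
    (∀ (σ : Equiv.Perm (Fin n)) (i : Fin n) (x : Fin n → Fin κ),
        μ i * c i x = μ (σ i) * c (σ i) (x ∘ ⇑σ.symm)) ↔
    (∀ (i j : Fin n) (x y : Fin n → Fin κ),
        x i = y j →
        (Finset.univ.erase i).val.map x = (Finset.univ.erase j).val.map y →
        μ i * c i x = μ j * c j y) :=
  stmt12_general n κ c μ
end

section
/- Fix n ≥ 1, κ ≥ 1, and a finite game c : Fin n → ((Fin n → Fin κ) → ℝ); write 1 for the first player. For each player i let γ_i ∈ Equiv.Perm (Fin n) be the cycle defined (in 1-based notation) by γ_i(1) = i, γ_i(j) = j − 1 for 2 ≤ j ≤ i, and γ_i(j) = j for j > i. Then c is ordinary symmetric if and only if both of the following hold: (i) for every permutation τ ∈ Equiv.Perm (Fin n) fixing the first player and every profile x, c 1 (x ∘ τ) = c 1 x; (ii) for every player i and every profile x, c i x = c 1 (x ∘ γ_i). -/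
/-!
A symmetric game is determined by the payoff of one fixed player `i₀`: transporting `i₀` to `i`
along any permutation `γ` with `γ i₀ = i` gives `c i x = c i₀ (x ∘ γ)`. Conversely, these
transport identities together with invariance of `c i₀` under the stabiliser of `i₀` give full
symmetry, because for any `σ` the permutation `(γ i)⁻¹ σ⁻¹ γ (σ i)` fixes `i₀`.
-/

namespace Game

variable {ι α β : Type*}

def IsOrdinarySymmetric (c : ι → (ι → α) → β) : Prop :=
  ∀ (σ : Equiv.Perm ι) (i : ι) (x : ι → α), c i x = c (σ i) (x ∘ σ.symm)

theorem IsOrdinarySymmetric.apply_perm {c : ι → (ι → α) → β} (hc : IsOrdinarySymmetric c)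
    (σ : Equiv.Perm ι) (j : ι) (x : ι → α) : c (σ j) x = c j (x ∘ σ) := by
  have h := hc σ j (x ∘ σ)
  rwa [Function.comp_assoc, Equiv.self_comp_symm, Function.comp_id, eq_comm] at h

theorem IsOrdinarySymmetric.comp_perm_of_apply_eq {c : ι → (ι → α) → β}
    (hc : IsOrdinarySymmetric c) {i₀ : ι} {τ : Equiv.Perm ι} (hτ : τ i₀ = i₀) (x : ι → α) :
    c i₀ (x ∘ τ) = c i₀ x := by
  rw [← hc.apply_perm, hτ]

theorem isOrdinarySymmetric_of_stabilizer_invariant {c : ι → (ι → α) → β} {i₀ : ι}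
    {γ : ι → Equiv.Perm ι} (hγ : ∀ i, γ i i₀ = i)
    (hstab : ∀ τ : Equiv.Perm ι, τ i₀ = i₀ → ∀ x, c i₀ (x ∘ τ) = c i₀ x)
    (htransport : ∀ i x, c i x = c i₀ (x ∘ γ i)) :
    IsOrdinarySymmetric c := by
  intro σ i x
  set τ : Equiv.Perm ι := (γ (σ i)).trans (σ.symm.trans (γ i).symm)
  have hτ : τ i₀ = i₀ := by
    simp [τ, hγ, Equiv.symm_apply_eq]
  have hxτ : (x ∘ γ i) ∘ τ = (x ∘ σ.symm) ∘ γ (σ i) := by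
    funext j
    simp [τ]
  rw [htransport i, htransport (σ i), ← hxτ, hstab τ hτ]

theorem isOrdinarySymmetric_iff {c : ι → (ι → α) → β} {i₀ : ι} {γ : ι → Equiv.Perm ι}
    (hγ : ∀ i, γ i i₀ = i) :
    IsOrdinarySymmetric c ↔
      (∀ τ : Equiv.Perm ι, τ i₀ = i₀ → ∀ x, c i₀ (x ∘ τ) = c i₀ x) ∧
        ∀ i x, c i x = c i₀ (x ∘ γ i) := by
  refine ⟨fun hc => ⟨fun τ hτ x => hc.comp_perm_of_apply_eq hτ x, fun i x => ?_⟩,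
    fun ⟨hstab, htransport⟩ => isOrdinarySymmetric_of_stabilizer_invariant hγ hstab htransport⟩
  rw [← hc.apply_perm, hγ]

end Game

theorem stmt13_general (n κ : ℕ) (hn : 1 ≤ n)
    (c : Fin n → (Fin n → Fin κ) → ℝ)
    (γ : Fin n → Equiv.Perm (Fin n))
    (hγ : ∀ i j : Fin n, γ i j =
      if (j : ℕ) = 0 then i
      else if (j : ℕ) ≤ (i : ℕ) then
        ⟨(j : ℕ) - 1, lt_of_le_of_lt (Nat.sub_le _ _) j.isLt⟩
      else j) :
    (∀ (σ : Equiv.Perm (Fin n)) (i : Fin n) (x : Fin n → Fin κ),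
        c i x = c (σ i) (x ∘ ⇑σ.symm)) ↔
    ((∀ τ : Equiv.Perm (Fin n), τ ⟨0, hn⟩ = ⟨0, hn⟩ →
        ∀ x : Fin n → Fin κ, c ⟨0, hn⟩ (x ∘ ⇑τ) = c ⟨0, hn⟩ x) ∧
      (∀ (i : Fin n) (x : Fin n → Fin κ), c i x = c ⟨0, hn⟩ (x ∘ ⇑(γ i)))) :=
  Game.isOrdinarySymmetric_iff fun i => by simp [hγ]

/-- `c` is ordinary symmetric iff (i) `c 1` is invariant under
every permutation of the players fixing player `1` (the index `0` of `Fin n`),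
and (ii) `c i x = c 1 (x ∘ γ_i)` for every `i`, where `γ_i` is the cycle with
`γ_i(1) = i`, `γ_i(j) = j - 1` for `2 ≤ j ≤ i` (in 1-based notation) and
`γ_i(j) = j` for `j > i`. -/
theorem stmt13 (n κ : ℕ) (hn : 1 ≤ n) (hκ : 1 ≤ κ)
    (c : Fin n → (Fin n → Fin κ) → ℝ)
    (γ : Fin n → Equiv.Perm (Fin n))
    (hγ : ∀ i j : Fin n, γ i j =
      if (j : ℕ) = 0 then i
      else if (j : ℕ) ≤ (i : ℕ) then
        ⟨(j : ℕ) - 1, lt_of_le_of_lt (Nat.sub_le _ _) j.isLt⟩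
      else j) :
    (∀ (σ : Equiv.Perm (Fin n)) (i : Fin n) (x : Fin n → Fin κ),
        c i x = c (σ i) (x ∘ ⇑σ.symm)) ↔
    ((∀ τ : Equiv.Perm (Fin n), τ ⟨0, hn⟩ = ⟨0, hn⟩ →
        ∀ x : Fin n → Fin κ, c ⟨0, hn⟩ (x ∘ ⇑τ) = c ⟨0, hn⟩ x) ∧
      (∀ (i : Fin n) (x : Fin n → Fin κ), c i x = c ⟨0, hn⟩ (x ∘ ⇑(γ i)))) :=
  stmt13_general n κ hn c γ hγ
end

section
/- For every n ≥ 1, the set of ordinary symmetric Boolean games with n players, i.e. the set of families c : Fin n → ((Fin n → Fin 2) → ℝ) satisfying c i x = c (σ i) (x ∘ σ⁻¹) for all σ ∈ Equiv.Perm (Fin n), all players i and all profiles x, is a linear subspace of the real vector space of all families Fin n → ((Fin n → Fin 2) → ℝ), and its dimension (finrank over ℝ) equals 2n. -/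
/-!
A permutation `σ` carries a player `i` and a profile `x` to `σ i` and `x ∘ σ⁻¹`, and two such
pairs lie in one orbit exactly when the two distinguished players choose the same action and, for
every action, equally many of the other players choose it. With Boolean actions this invariant is
the pair `(x i, k)`, `k ∈ {0, …, n - 1}` the number of other players choosing `1`, and every such
pair occurs. So the symmetric games are exactly the functions of the invariant, a space of
dimension `2n`.
-/

open Finset Equiv Function

namespace SymmetricGame

section Orbits

variable {ι : Type*} [Fintype ι]

lemma exists_perm_comp_eq_of_card_fiber_eq {γ : Type*} [DecidableEq γ] {X Y : ι → γ}
    (h : ∀ p, #{j | X j = p} = #{j | Y j = p}) : ∃ σ : Perm ι, ∀ j, Y (σ j) = X j :=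
  ⟨ofFiberEquiv fun p => Fintype.equivOfCardEq (by simpa [Fintype.card_subtype] using h p),
    ofFiberEquiv_map _⟩

variable [DecidableEq ι] {β : Type*} [DecidableEq β]

def othersPlaying (i : ι) (x : ι → β) (b : β) : ℕ := #{j | j ≠ i ∧ x j = b}

lemma othersPlaying_lt_card (i : ι) (x : ι → β) (b : β) :
    othersPlaying i x b < Fintype.card ι :=
  card_lt_univ_of_notMem (x := i) (by simp)

lemma sum_othersPlaying [Fintype β] (i : ι) (x : ι → β) :
    ∑ b, othersPlaying i x b = Fintype.card ι - 1 := by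
  have h := card_eq_sum_card_fiberwise (s := univ.erase i) (t := univ) (f := x) (by simp)
  rw [card_erase_of_mem (mem_univ i), card_univ] at h
  rw [h]
  refine sum_congr rfl fun b _ => congrArg card ?_
  ext j
  simp [and_comm]

lemma othersPlaying_perm (σ : Perm ι) (i : ι) (x : ι → β) (b : β) :
    othersPlaying (σ i) (x ∘ σ.symm) b = othersPlaying i x b :=
  (card_equiv σ fun j => by simp).symm

lemma exists_perm_of_othersPlaying_eq {i i' : ι} {x y : ι → β} (hself : x i = y i')
    (hothers : ∀ b, othersPlaying i x b = othersPlaying i' y b) :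
    ∃ σ : Perm ι, σ i = i' ∧ x ∘ σ.symm = y := by
  -- tag every player with its action and with whether it is the distinguished player
  obtain ⟨σ, hσ⟩ := exists_perm_comp_eq_of_card_fiber_eq
    (X := fun j => (x j, decide (j = i))) (Y := fun j => (y j, decide (j = i'))) <| by
    rintro ⟨b, _ | _⟩
    · simpa [othersPlaying, and_comm] using hothers b
    · simp [and_comm, ← filter_filter, filter_eq', filter_singleton, hself, apply_ite card]
  refine ⟨σ, ?_, ?_⟩
  · simpa using congrArg Prod.snd (hσ i)
  · funext j
    simpa using (congrArg Prod.fst (hσ (σ.symm j))).symm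

end Orbits

section Games

variable (R : Type*) [Semiring R] (ι β : Type*)

def symmetricGames : Submodule R (ι → (ι → β) → R) where
  carrier := {c | ∀ (σ : Perm ι) i x, c i x = c (σ i) (x ∘ σ.symm)}
  add_mem' hc hd σ i x := by simp [hc σ i x, hd σ i x]
  zero_mem' _ _ _ := rfl
  smul_mem' r _ hc σ i x := by simp [hc σ i x]

variable {R ι β}

lemma apply_eq_of_othersPlaying_eq [Fintype ι] [DecidableEq ι] [DecidableEq β]
    {c : ι → (ι → β) → R} (hc : c ∈ symmetricGames R ι β) {i i' : ι} {x y : ι → β}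
    (hself : x i = y i') (hothers : ∀ b, othersPlaying i x b = othersPlaying i' y b) :
    c i x = c i' y := by
  obtain ⟨σ, rfl, rfl⟩ := exists_perm_of_othersPlaying_eq hself hothers
  exact hc σ i x

end Games

section Boolean

variable {n : ℕ}

def boolSignature (i : Fin n) (x : Fin n → Fin 2) : Fin 2 × Fin n :=
  (x i, ⟨othersPlaying i x 1, by simpa using othersPlaying_lt_card i x 1⟩)

lemma boolSignature_perm (σ : Perm (Fin n)) (i : Fin n) (x : Fin n → Fin 2) :
    boolSignature (σ i) (x ∘ σ.symm) = boolSignature i x := by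
  simp [boolSignature, othersPlaying_perm]

lemma uncurry_boolSignature_surjective : Surjective (uncurry (boolSignature (n := n))) := by
  rintro ⟨a, k⟩
  let x : Fin n → Fin 2 := fun j => if j < k then 1 else if j = k then a else 0
  have hones : othersPlaying k x 1 = k := by
    rw [← Fin.card_Iio k]
    refine congrArg card (Finset.ext fun j => ?_)
    rcases lt_trichotomy j k with h | rfl | h
    · simp [x, h, h.ne]
    · simp
    · simp [x, h.not_gt, h.ne']
  exact ⟨(k, x), Prod.ext (by simp [boolSignature, x]) (Fin.ext hones)⟩

lemma othersPlaying_eq_of_boolSignature_eq {i i' : Fin n} {x y : Fin n → Fin 2}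
    (h : boolSignature i x = boolSignature i' y) (b : Fin 2) :
    othersPlaying i x b = othersPlaying i' y b := by
  simp only [boolSignature, Prod.mk.injEq, Fin.mk.injEq] at h
  have hx := sum_othersPlaying i x
  have hy := sum_othersPlaying i' y
  rw [Fin.sum_univ_two] at hx hy
  revert b
  rw [Fin.forall_fin_two]
  exact ⟨by omega, h.2⟩

variable (R : Type*) [Semiring R]

def gameOfSignature : (Fin 2 × Fin n → R) →ₗ[R] (Fin n → (Fin n → Fin 2) → R) where
  toFun f i x := f (boolSignature i x)
  map_add' _ _ := rfl
  map_smul' _ _ := rfl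

lemma gameOfSignature_injective : Injective (gameOfSignature R (n := n)) := by
  intro f g h
  funext p
  obtain ⟨⟨i, x⟩, rfl⟩ := uncurry_boolSignature_surjective p
  exact congrFun (congrFun h i) x

lemma range_gameOfSignature :
    LinearMap.range (gameOfSignature R) = symmetricGames R (Fin n) (Fin 2) := by
  ext c
  constructor
  · rintro ⟨f, rfl⟩ σ i x
    simp [gameOfSignature, boolSignature_perm]
  · intro hc
    obtain ⟨g, hg⟩ := (uncurry_boolSignature_surjective (n := n)).hasRightInverse
    refine ⟨uncurry c ∘ g, ?_⟩
    funext i x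
    have h := hg (boolSignature i x)
    exact apply_eq_of_othersPlaying_eq hc (congrArg Prod.fst h)
      (othersPlaying_eq_of_boolSignature_eq h)

theorem finrank_symmetricGames_fin_two [StrongRankCondition R] :
    Module.finrank R (symmetricGames R (Fin n) (Fin 2)) = 2 * n := by
  rw [← range_gameOfSignature, LinearMap.finrank_range_of_inj (gameOfSignature_injective R),
    Module.finrank_fintype_fun_eq_card, Fintype.card_prod, Fintype.card_fin, Fintype.card_fin]

end Boolean

end SymmetricGame

open SymmetricGame

theorem stmt14_general (n : ℕ) :
    ∃ S : Submodule ℝ (Fin n → (Fin n → Fin 2) → ℝ),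
      (∀ c : Fin n → (Fin n → Fin 2) → ℝ,
        c ∈ S ↔ ∀ (σ : Equiv.Perm (Fin n)) (i : Fin n) (x : Fin n → Fin 2),
          c i x = c (σ i) (x ∘ ⇑σ.symm)) ∧
      Module.finrank ℝ S = 2 * n :=
  ⟨symmetricGames ℝ (Fin n) (Fin 2), fun _ => Iff.rfl, finrank_symmetricGames_fin_two ℝ⟩

/-- the ordinary symmetric Boolean games with `n` players form a
linear subspace of the real vector space `Fin n → ((Fin n → Fin 2) → ℝ)` of
all Boolean games, of dimension `2n`. -/
theorem stmt14 (n : ℕ) (hn : 1 ≤ n) :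
    ∃ S : Submodule ℝ (Fin n → (Fin n → Fin 2) → ℝ),
      (∀ c : Fin n → (Fin n → Fin 2) → ℝ,
        c ∈ S ↔ ∀ (σ : Equiv.Perm (Fin n)) (i : Fin n) (x : Fin n → Fin 2),
          c i x = c (σ i) (x ∘ ⇑σ.symm)) ∧
      Module.finrank ℝ S = 2 * n :=
  stmt14_general n
end

section
/- Every ordinary symmetric Boolean game is an exact potential game: if n ≥ 1 and c : Fin n → ((Fin n → Fin 2) → ℝ) satisfies c i x = c (σ i) (x ∘ σ⁻¹) for every σ ∈ Equiv.Perm (Fin n), player i, and profile x, then there exists P : (Fin n → Fin 2) → ℝ such that for every player i and all profiles x, y with x j = y j for all j ≠ i, c i x − c i y = P x − P y. -/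
/-!
A symmetric game is anonymous: the payoff `c i x` depends only on the action `x i` and on the
number of players playing `1`, since any two profiles with the same such data differ by a
permutation of the players moving `i` to `i'`. Hence `c i x = F (x i) k` with `k` the number
of ones, and the potential `P x = ∑_{t < k} (F 1 (t + 1) - F 0 t)` works: a unilateral switch
of one player from `0` to `1` raises `k` by one, which adds exactly the term `F 1 (k + 1) - F 0 k`.
-/

open Finset Function Equiv

variable {ι α : Type*}

def IsSymmetricGame (c : ι → (ι → α) → ℝ) : Prop :=
  ∀ (σ : Perm ι) (i : ι) (x : ι → α), c i x = c (σ i) (x ∘ σ.symm)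

def IsExactPotential (c : ι → (ι → α) → ℝ) (P : (ι → α) → ℝ) : Prop :=
  ∀ (i : ι) (x y : ι → α), (∀ j, j ≠ i → x j = y j) → c i x - c i y = P x - P y

theorem exists_perm_comp_eq_of_card_filter_eq [Fintype ι] [DecidableEq α] {x y : ι → α}
    (h : ∀ a, #{j | x j = a} = #{j | y j = a}) : ∃ σ : Perm ι, y ∘ σ = x :=
  ⟨ofFiberEquiv fun a => Fintype.equivOfCardEq (by simpa only [Fintype.card_subtype] using h a),
    funext (ofFiberEquiv_map _)⟩

theorem comp_swap_of_apply_eq [DecidableEq ι] {x : ι → α} {i j : ι} (h : x i = x j) :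
    x ∘ swap i j = x := by
  rw [comp_swap_eq_update, h, update_eq_self, ← h, update_eq_self]

theorem IsSymmetricGame.payoff_eq_of_card_filter_eq [Fintype ι] [DecidableEq ι] [DecidableEq α]
    {c : ι → (ι → α) → ℝ} (hc : IsSymmetricGame c) {i i' : ι} {x y : ι → α} (hi : x i = y i')
    (h : ∀ a, #{j | x j = a} = #{j | y j = a}) : c i x = c i' y := by
  obtain ⟨σ, hσ⟩ := exists_perm_comp_eq_of_card_filter_eq h
  set τ : Perm ι := σ.trans (swap (σ i) i')
  have hτi : τ i = i' := swap_apply_left _ _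
  have hτ : y ∘ τ = x := by
    rw [coe_trans, ← comp_assoc, comp_swap_of_apply_eq (by rw [← hi, ← hσ, comp_apply]), hσ]
  rw [hc τ i x, hτi, ← hτ, comp_assoc, self_comp_symm, comp_id]

theorem card_filter_eq_zero_fin_two [Fintype ι] (x : ι → Fin 2) :
    #{j | x j = 0} = Fintype.card ι - #{j | x j = 1} := by
  rw [← card_univ, ← card_filter_add_card_filter_not (s := univ) (fun j => x j = 1),
    Nat.add_sub_cancel_left]
  congr 1
  exact filter_congr fun j _ => by omega

theorem card_filter_eq_of_card_filter_eq_one [Fintype ι] {x y : ι → Fin 2}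
    (h : #{j | x j = 1} = #{j | y j = 1}) (a : Fin 2) : #{j | x j = a} = #{j | y j = a} := by
  fin_cases a
  · simp only [Fin.zero_eta, card_filter_eq_zero_fin_two, h]
  · exact h

theorem IsSymmetricGame.exists_payoff_eq [Fintype ι] [DecidableEq ι] {c : ι → (ι → Fin 2) → ℝ}
    (hc : IsSymmetricGame c) :
    ∃ F : Fin 2 → ℕ → ℝ, ∀ i x, c i x = F (x i) #{j | x j = 1} := by
  let key : ι × (ι → Fin 2) → Fin 2 × ℕ := fun p => (p.2 p.1, #{j | p.2 j = 1})
  have hfac : FactorsThrough (fun p => c p.1 p.2) key := by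
    rintro ⟨i, x⟩ ⟨i', y⟩ h
    obtain ⟨hi, hcard⟩ := Prod.ext_iff.mp h
    exact hc.payoff_eq_of_card_filter_eq hi (card_filter_eq_of_card_filter_eq_one hcard)
  exact ⟨fun a k => extend key (fun p => c p.1 p.2) 0 (a, k),
    fun i x => (hfac.extend_apply 0 (i, x)).symm⟩

theorem card_filter_eq_one_eq_add_one [Fintype ι] [DecidableEq ι] {i : ι} {x y : ι → Fin 2}
    (h : ∀ j, j ≠ i → x j = y j) (hx : x i = 1) (hy : y i = 0) :
    #{j | x j = 1} = #{j | y j = 1} + 1 := by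
  have hins : (univ.filter fun j => x j = 1) = insert i (univ.filter fun j => y j = 1) := by
    ext j
    by_cases hj : j = i
    · simp [hj, hx]
    · simp [hj, h j hj]
  rw [hins, card_insert_of_notMem (by simp [hy])]

theorem isExactPotential_of_payoff_eq [Fintype ι] [DecidableEq ι] {c : ι → (ι → Fin 2) → ℝ}
    (F : Fin 2 → ℕ → ℝ) (hF : ∀ i x, c i x = F (x i) #{j | x j = 1}) :
    IsExactPotential c fun x => ∑ t ∈ range #{j | x j = 1}, (F 1 (t + 1) - F 0 t) := by
  set P : (ι → Fin 2) → ℝ := fun x => ∑ t ∈ range #{j | x j = 1}, (F 1 (t + 1) - F 0 t)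
  have switch_on : ∀ i (x y : ι → Fin 2), (∀ j, j ≠ i → x j = y j) → x i = 1 → y i = 0 →
      c i x - c i y = P x - P y := by
    intro i x y h hx hy
    simp only [P, hF i x, hF i y, hx, hy, card_filter_eq_one_eq_add_one h hx hy, sum_range_succ]
    ring
  intro i x y h
  by_cases hxy : x i = y i
  · obtain rfl : x = y := funext fun j => by
      by_cases hj : j = i
      · rw [hj, hxy]
      · exact h j hj
    rw [sub_self, sub_self]
  · rcases (by omega : x i = 1 ∧ y i = 0 ∨ x i = 0 ∧ y i = 1) with ⟨hx, hy⟩ | ⟨hx, hy⟩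
    · exact switch_on i x y h hx hy
    · rw [← neg_sub, switch_on i y x (fun j hj => (h j hj).symm) hy hx, neg_sub]

theorem stmt15_general (n : ℕ) (c : Fin n → (Fin n → Fin 2) → ℝ)
    (hsym : ∀ (σ : Equiv.Perm (Fin n)) (i : Fin n) (x : Fin n → Fin 2),
      c i x = c (σ i) (x ∘ ⇑σ.symm)) :
    ∃ P : (Fin n → Fin 2) → ℝ,
      ∀ (i : Fin n) (x y : Fin n → Fin 2), (∀ j, j ≠ i → x j = y j) →
        c i x - c i y = P x - P y := by
  obtain ⟨F, hF⟩ := IsSymmetricGame.exists_payoff_eq hsym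
  exact ⟨_, isExactPotential_of_payoff_eq F hF⟩

/-- every ordinary symmetric Boolean game is an exact potential
game. -/
theorem stmt15 (n : ℕ) (hn : 1 ≤ n) (c : Fin n → (Fin n → Fin 2) → ℝ)
    (hsym : ∀ (σ : Equiv.Perm (Fin n)) (i : Fin n) (x : Fin n → Fin 2),
      c i x = c (σ i) (x ∘ ⇑σ.symm)) :
    ∃ P : (Fin n → Fin 2) → ℝ,
      ∀ (i : Fin n) (x y : Fin n → Fin 2), (∀ j, j ≠ i → x j = y j) →
        c i x - c i y = P x - P y :=
  stmt15_general n c hsym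
end

section
/- Every negation-symmetric Boolean game is an exact potential game, with an explicit potential: let n ≥ 1, write 1 for the first player, let ¬ denote the nontrivial permutation of Fin 2, and let c : Fin n → ((Fin n → Fin 2) → ℝ) satisfy, for every player i ≠ 1 and every profile x, c i x' = c 1 x, where x' is the profile obtained from x by negating its coordinates at players 1 and i (x'_1 = ¬x_1, x'_i = ¬x_i, and x'_j = x_j for j ∉ {1,i}). Then the function P(x) := − c 1 x'' — where x'' is x with only its first coordinate negated — is an exact potential function: for every player i and all profiles x, y with x j = y j for all j ≠ i, c i x − c i y = P x − P y. -/
/-! Write `x^i` for the profile `x` with coordinate `i` negated. Negation-symmetry, applied to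
`x^1`, says `c i (x^i) = c 1 (x^1)` for every player `i`. If `y` differs from `x` only at `i`,
then `y = x^i` and `x = y^i` (there are only two strategies), so
`c i x - c i y = c 1 (y^1) - c 1 (x^1) = P x - P y`. -/

open Function

section FlipAt

variable {ι α : Type*} [DecidableEq ι]

def flipAt (s : α → α) (i : ι) (x : ι → α) : ι → α :=
  update x i (s (x i))

theorem flipAt_flipAt_self {s : α → α} (hs : Involutive s) (i : ι) (x : ι → α) :
    flipAt s i (flipAt s i x) = x := by
  simp [flipAt, hs (x i)]

theorem eq_or_eq_flipAt_swap_of_forall_ne {i : ι} {x y : ι → Fin 2} (hxy : ∀ j, j ≠ i → x j = y j) :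
    y = x ∨ y = flipAt (Equiv.swap 0 1) i x := by
  have two_values : ∀ a b : Fin 2, a ≠ b → Equiv.swap 0 1 a = b := by decide
  by_cases hi : x i = y i
  · left
    funext j
    by_cases hj : j = i
    · subst hj; exact hi.symm
    · exact (hxy j hj).symm
  · right
    funext j
    by_cases hj : j = i
    · subst hj; simp [flipAt, two_values _ _ hi]
    · simp [flipAt, update_of_ne hj, hxy j hj]

theorem payoff_flipAt_eq {β : Type*} {s : α → α} (hs : Involutive s)
    (c : ι → (ι → α) → β) (p : ι)
    (hneg : ∀ i, i ≠ p → ∀ x, c i (flipAt s i (flipAt s p x)) = c p x) (i : ι) (x : ι → α) :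
    c i (flipAt s i x) = c p (flipAt s p x) := by
  rcases eq_or_ne i p with rfl | hip
  · rfl
  · simpa [flipAt_flipAt_self hs] using hneg i hip (flipAt s p x)

/-- every negation-symmetric Boolean game is an exact potential
game, with explicit potential `P x = - c 1 x''` where `x''` is `x` with its
first coordinate negated. Here player `1` is the index `0` of `Fin n`, and
negation is the nontrivial permutation `Equiv.swap 0 1` of `Fin 2`.
Negation-symmetry: for every `i ≠ 1` and profile `x`, the payoff `c i` at the
profile obtained from `x` by negating coordinates `1` and `i` equals `c 1 x`. -/
theorem stmt19 (n : ℕ) (hn : 1 ≤ n) (c : Fin n → (Fin n → Fin 2) → ℝ)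
    (hneg : ∀ i : Fin n, i ≠ ⟨0, hn⟩ → ∀ x : Fin n → Fin 2,
      c i (Function.update
            (Function.update x ⟨0, hn⟩ (Equiv.swap (0 : Fin 2) 1 (x ⟨0, hn⟩)))
            i (Equiv.swap (0 : Fin 2) 1 (x i)))
        = c ⟨0, hn⟩ x) :
    ∀ (i : Fin n) (x y : Fin n → Fin 2), (∀ j, j ≠ i → x j = y j) →
      c i x - c i y
        = (-(c ⟨0, hn⟩
              (Function.update x ⟨0, hn⟩ (Equiv.swap (0 : Fin 2) 1 (x ⟨0, hn⟩)))))
          - (-(c ⟨0, hn⟩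
              (Function.update y ⟨0, hn⟩ (Equiv.swap (0 : Fin 2) 1 (y ⟨0, hn⟩))))) := by
  intro i x y hxy
  set p : Fin n := ⟨0, hn⟩
  set s : Fin 2 → Fin 2 := ⇑(Equiv.swap (0 : Fin 2) 1)
  have hs : Involutive s := Equiv.swap_apply_self 0 1
  have hsymm : ∀ i, i ≠ p → ∀ x, c i (flipAt s i (flipAt s p x)) = c p x := fun i hip x => by
    simpa [flipAt, update_of_ne hip] using hneg i hip x
  change c i x - c i y = -c p (flipAt s p x) - -c p (flipAt s p y)
  rw [← payoff_flipAt_eq hs c p hsymm i x, ← payoff_flipAt_eq hs c p hsymm i y]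
  rcases eq_or_eq_flipAt_swap_of_forall_ne hxy with rfl | rfl
  · ring
  · rw [flipAt_flipAt_self hs]
    ring
end FlipAt
end
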